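/- Let μ be the Gaussian measure on ℝ with mean α ∈ ℝ and variance β², where β > 0, let K > 0, let ρ ∈ {1, −1}, and set γ = (α + β² − ln K)/β. Then ∫_{{ω : ρ·e^ω ≥ ρ·K}} e^ω dμ(ω) = e^{α + β²/2} · Φ(ργ), where Φ is the standard normal cumulative distribution function. -/

import Mathlib

/-! Multiplying the density of `N(α, β²)` by `e^ω` completes the square into `e^{α + β²/2}` times
the density of `N(α + β², β²)`. The integral is therefore `e^{α + β²/2}` times the
`N(α + β², β²)`-probability of `{ω ≥ log K}` (for `ρ = 1`) or `{ω ≤ log K}` (for `ρ = -1`), and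
standardizing turns these probabilities into `Φ(γ)` and `Φ(-γ)`. -/

open MeasureTheory Real ProbabilityTheory

/-- The standard normal cumulative distribution function
`Φ(x) = ∫_{−∞}^{x} (2π)^{−1/2} e^{−s²/2} ds`. -/
noncomputable def stdNormalCDF (x : ℝ) : ℝ :=
  ∫ s in Set.Iic x, (Real.sqrt (2 * Real.pi))⁻¹ * Real.exp (-s ^ 2 / 2)

open scoped NNReal

namespace ProbabilityTheory

lemma gaussianReal_real_eq_setIntegral (μ : ℝ) {v : ℝ≥0} (hv : v ≠ 0) (s : Set ℝ) :
    (gaussianReal μ v).real s = ∫ x in s, gaussianPDFReal μ v x := by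
  rw [measureReal_def, gaussianReal_apply_eq_integral μ hv,
    ENNReal.toReal_ofReal (setIntegral_nonneg_of_ae (ae_of_all _ (gaussianPDFReal_nonneg μ v)))]

lemma stdNormalCDF_eq_gaussianReal_Iic (t : ℝ) :
    stdNormalCDF t = (gaussianReal 0 1).real (Set.Iic t) := by
  rw [gaussianReal_real_eq_setIntegral 0 one_ne_zero, stdNormalCDF]
  simp [gaussianPDFReal]

lemma gaussianReal_eq_map_affine (m b : ℝ) :
    gaussianReal m (b ^ 2).toNNReal = (gaussianReal 0 1).map (fun x ↦ b * x + m) := by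
  have h_comp : (fun x : ℝ ↦ b * x + m) = (· + m) ∘ (b * ·) := rfl
  rw [h_comp, ← Measure.map_map (measurable_add_const m) (measurable_const_mul b),
    gaussianReal_map_const_mul, gaussianReal_map_add_const]
  congr 1
  · ring
  · ext
    simp [sq_nonneg]

variable {m b : ℝ}

lemma gaussianReal_real_Iic (hb : 0 < b) (a : ℝ) :
    (gaussianReal m (b ^ 2).toNNReal).real (Set.Iic a) = stdNormalCDF ((a - m) / b) := by
  have h_pre : (fun x ↦ b * x + m) ⁻¹' Set.Iic a = Set.Iic ((a - m) / b) := by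
    ext x
    simp only [Set.mem_preimage, Set.mem_Iic, le_div_iff₀ hb]
    constructor <;> intro <;> linarith
  rw [gaussianReal_eq_map_affine, map_measureReal_apply (by fun_prop) measurableSet_Iic, h_pre,
    stdNormalCDF_eq_gaussianReal_Iic]

lemma gaussianReal_real_Ici (hb : 0 < b) (a : ℝ) :
    (gaussianReal m (b ^ 2).toNNReal).real (Set.Ici a) = stdNormalCDF ((m - a) / b) := by
  have h_pre : (fun x ↦ -b * x + m) ⁻¹' Set.Ici a = Set.Iic ((m - a) / b) := by
    ext x
    simp only [Set.mem_preimage, Set.mem_Ici, Set.mem_Iic, le_div_iff₀ hb]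
    constructor <;> intro <;> linarith
  -- `-b` has the same square as `b` but reverses the order, turning the upper tail into a lower one
  rw [← neg_sq, gaussianReal_eq_map_affine, map_measureReal_apply (by fun_prop) measurableSet_Ici,
    h_pre, stdNormalCDF_eq_gaussianReal_Iic]

lemma gaussianPDFReal_mul_exp (μ : ℝ) (v : ℝ≥0) (x : ℝ) :
    gaussianPDFReal μ v x * exp x = exp (μ + v / 2) * gaussianPDFReal (μ + v) v x := by
  rcases eq_or_ne v 0 with rfl | hv
  · simp
  have hv' : (v : ℝ) ≠ 0 := by exact_mod_cast hv
  have h_exp : exp (-(x - μ) ^ 2 / (2 * v)) * exp x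
      = exp (μ + v / 2) * exp (-(x - (μ + v)) ^ 2 / (2 * v)) := by
    rw [← exp_add, ← exp_add]
    congr 1
    field_simp
    ring
  simp only [gaussianPDFReal, mul_assoc, h_exp]
  ring

lemma setIntegral_exp_gaussianReal (μ : ℝ) {v : ℝ≥0} (hv : v ≠ 0) {s : Set ℝ}
    (hs : MeasurableSet s) :
    ∫ x in s, exp x ∂gaussianReal μ v = exp (μ + v / 2) * (gaussianReal (μ + v) v).real s := by
  rw [gaussianReal_real_eq_setIntegral _ hv, ← integral_const_mul, ← integral_indicator hs,
    integral_gaussianReal_eq_integral_smul hv, ← integral_indicator hs]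
  congr 1 with x
  by_cases hx : x ∈ s <;> simp [hx, gaussianPDFReal_mul_exp]

end ProbabilityTheory

theorem gaussian_integral_exp_on_event (α β K ρ γ : ℝ) (hβ : 0 < β) (hK : 0 < K)
    (hρ : ρ = 1 ∨ ρ = -1) (hγ : γ = (α + β ^ 2 - Real.log K) / β) :
    ∫ ω in {ω : ℝ | ρ * Real.exp ω ≥ ρ * K}, Real.exp ω
        ∂(gaussianReal α (Real.toNNReal (β ^ 2)))
      = Real.exp (α + β ^ 2 / 2) * stdNormalCDF (ρ * γ) := by
  have hv : (β ^ 2).toNNReal ≠ 0 := by simp [hβ.ne']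
  have hv_coe : ((β ^ 2).toNNReal : ℝ) = β ^ 2 := Real.coe_toNNReal _ (sq_nonneg β)
  rcases hρ with rfl | rfl
  · have h_event : {ω : ℝ | 1 * exp ω ≥ 1 * K} = Set.Ici (log K) := by
      ext ω
      simp [log_le_iff_le_exp hK]
    rw [h_event, setIntegral_exp_gaussianReal α hv measurableSet_Ici, hv_coe,
      gaussianReal_real_Ici hβ, hγ, one_mul]
  · have h_event : {ω : ℝ | -1 * exp ω ≥ -1 * K} = Set.Iic (log K) := by
      ext ω
      simp [le_log_iff_exp_le hK]
    rw [h_event, setIntegral_exp_gaussianReal α hv measurableSet_Iic, hv_coe,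
      gaussianReal_real_Iic hβ, hγ]
    congr 2
    ring
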